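/- The algebra A = K⟨x,y⟩/(x², xy + y² + y²x) over a field K of characteristic 0 is not self-injective, i.e., the right regular module A_A is not an injective A-module. -/

import Mathlib

universe u

noncomputable section

/-- The generator `x` of the free algebra `K⟨x,y⟩`. -/
def Xg (K : Type u) [Field K] : FreeAlgebra K (Fin 2) := FreeAlgebra.ι K 0

/-- The generator `y` of the free algebra `K⟨x,y⟩`. -/
def Yg (K : Type u) [Field K] : FreeAlgebra K (Fin 2) := FreeAlgebra.ι K 1

/-- The relations `x² = 0` and `xy + y² + y²x = 0`. -/
inductive ARel (K : Type u) [Field K] :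
    FreeAlgebra K (Fin 2) → FreeAlgebra K (Fin 2) → Prop
  | sq : ARel K (Xg K * Xg K) 0
  | mix : ARel K (Xg K * Yg K + Yg K * Yg K + Yg K * Yg K * Xg K) 0

/-- The algebra `A = K⟨x,y⟩/(x², xy + y² + y²x)`. -/
def AlgA (K : Type u) [Field K] : Type u := RingQuot (ARel K)

instance (K : Type u) [Field K] : Ring (AlgA K) :=
  inferInstanceAs (Ring (RingQuot (ARel K)))

instance (K : Type u) [Field K] : Algebra K (AlgA K) :=
  inferInstanceAs (Algebra K (RingQuot (ARel K)))

/-!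
The elements `u = xy + y²` and `v = yx` of `A` are killed on the right by `x` and `y`, so
`u r = ε(r) u` and `v r = ε(r) v` for the augmentation `ε : A → K`; as `u ≠ 0`, every `r`
with `u r = 0` also satisfies `v r = 0`. If `A_A` were injective, the right-linear map
`uA → A`, `u r ↦ v r`, would extend to `A`, that is, be left multiplication by some `a`, so
`v = a u`. But `u` is also killed on the left by `x` and `y`, so `a u = ε(a) u`, whereas a
five-dimensional representation of `A` shows that `v` is not a multiple of `u`.
-/

section Injective

universe v

variable {R : Type*} [Ring R] {M : Type*} [AddCommGroup M] [Module R M] {Q : Type v}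
  [AddCommGroup Q] [Module R Q] [Small.{v} R]

theorem Module.Injective.exists_linearMap_apply_eq [Module.Injective R Q] {m : M} {q : Q}
    (h : Ideal.torsionOf R M m ≤ Ideal.torsionOf R Q q) :
    ∃ φ : M →ₗ[R] Q, φ m = q := by
  let f := (R ∙ m).subtype ∘ₗ (Ideal.quotTorsionOfEquivSpanSingleton R M m).toLinearMap
  have hf : Function.Injective f :=
    Subtype.val_injective.comp (Ideal.quotTorsionOfEquivSpanSingleton R M m).injective
  obtain ⟨φ, hφ⟩ := Module.Injective.extension_property R Q _ M f hf
    ((Ideal.torsionOf R M m).liftQ (LinearMap.toSpanSingleton R Q q) h)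
  refine ⟨φ, ?_⟩
  calc φ m = φ (f (Submodule.Quotient.mk 1)) := by simp [f]
    _ = q := (LinearMap.congr_fun hφ _).trans (one_smul R q)

theorem exists_mul_eq_of_injective_op {A : Type v} [Ring A] [Module.Injective Aᵐᵒᵖ A]
    {u w : A} (h : ∀ r, u * r = 0 → w * r = 0) : ∃ a, a * u = w := by
  obtain ⟨φ, hφ⟩ := Module.Injective.exists_linearMap_apply_eq (R := Aᵐᵒᵖ) (m := u) (q := w)
    fun r hr ↦ h r.unop hr
  refine ⟨φ 1, ?_⟩
  rw [← hφ, ← op_smul_eq_mul, ← map_smul, op_smul_eq_mul, one_mul]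

end Injective

section Augmentation

variable {K A : Type*} [CommSemiring K] [Semiring A] [Algebra K A] (ε : A →ₐ[K] K) {s : Set A}
  {w : A}

theorem mul_right_eq_smul_of_adjoin_eq_top (hs : Algebra.adjoin K s = ⊤)
    (hw : ∀ a ∈ s, w * a = ε a • w) (a : A) : w * a = ε a • w := by
  induction (hs ▸ Algebra.mem_top : a ∈ Algebra.adjoin K s) using Algebra.adjoin_induction with
  | mem a ha => exact hw a ha
  | algebraMap r => rw [AlgHom.commutes, Algebra.algebraMap_self_apply,
      Algebra.algebraMap_eq_smul_one, mul_smul_comm, mul_one]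
  | add a b _ _ ha hb => rw [mul_add, ha, hb, map_add, add_smul]
  | mul a b _ _ ha hb => rw [← mul_assoc, ha, smul_mul_assoc, hb, smul_smul, map_mul]

theorem mul_left_eq_smul_of_adjoin_eq_top (hs : Algebra.adjoin K s = ⊤)
    (hw : ∀ a ∈ s, a * w = ε a • w) (a : A) : a * w = ε a • w := by
  induction (hs ▸ Algebra.mem_top : a ∈ Algebra.adjoin K s) using Algebra.adjoin_induction with
  | mem a ha => exact hw a ha
  | algebraMap r => rw [AlgHom.commutes, Algebra.algebraMap_self_apply,
      Algebra.algebraMap_eq_smul_one, smul_mul_assoc, one_mul]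
  | add a b _ _ ha hb => rw [add_mul, ha, hb, map_add, add_smul]
  | mul a b _ _ ha hb => rw [mul_assoc, hb, mul_smul_comm, ha, smul_smul, map_mul, mul_comm]

end Augmentation

theorem mul_mul_eq_zero_of_mul_self_eq_zero_of_rel {B : Type*} [Ring B] {a b : B}
    (hsq : a * a = 0) (hrel : a * b + b * b + b * b * a = 0) :
    a * b * b = 0 ∧ b * b * b = 0 ∧ b * a * b = 0 := by
  have habb : a * b * b = 0 := by
    linear_combination (norm := noncomm_ring)
      a * hrel - hsq * b - a * hrel * a + hsq * (b * a) + a * b * b * hsq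
  have hb4 : b * b * b * b = 0 := by
    linear_combination (norm := noncomm_ring) hrel * (b * b) - habb * b - b * b * habb
  have hbbab : b * b * a * b = 0 := by
    linear_combination (norm := noncomm_ring) b * b * hrel - hb4 - hb4 * a
  have hbbb : b * b * b = 0 := by
    linear_combination (norm := noncomm_ring) hrel * b - habb - hbbab
  refine ⟨habb, hbbb, ?_⟩
  linear_combination (norm := noncomm_ring) b * hrel - hbbb - hbbb * a

namespace AlgA

variable {K : Type u} [Field K]

def mk : FreeAlgebra K (Fin 2) →ₐ[K] AlgA K := RingQuot.mkAlgHom K (ARel K)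

theorem mk_surjective : Function.Surjective (mk : FreeAlgebra K (Fin 2) → AlgA K) :=
  RingQuot.mkAlgHom_surjective K (ARel K)

theorem mk_rel ⦃a b : FreeAlgebra K (Fin 2)⦄ (h : ARel K a b) : mk a = mk b :=
  RingQuot.mkAlgHom_rel K h

def x : AlgA K := mk (Xg K)

def y : AlgA K := mk (Yg K)

variable (K) in
theorem x_mul_x : (x * x : AlgA K) = 0 := by
  simpa [x] using mk_rel ARel.sq

variable (K) in
theorem rel : (x * y + y * y + y * y * x : AlgA K) = 0 := by
  simpa [x, y] using mk_rel ARel.mix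

theorem adjoin_x_y : Algebra.adjoin K {x, y} = (⊤ : Subalgebra K (AlgA K)) := by
  have : ({x, y} : Set (AlgA K)) = mk '' Set.range (FreeAlgebra.ι K) := by
    ext a
    simp [Fin.exists_fin_two, x, y, Xg, Yg, eq_comm]
  rw [this, Algebra.adjoin_image, FreeAlgebra.adjoin_range_ι, Algebra.map_top,
    (AlgHom.range_eq_top _).mpr mk_surjective]

section Lift

variable (K) {B : Type*} [Ring B] [Algebra K B] (X Y : B) (hX : X * X = 0)
  (hXY : X * Y + Y * Y + Y * Y * X = 0)

def lift : AlgA K →ₐ[K] B :=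
  RingQuot.liftAlgHom K ⟨FreeAlgebra.lift K ![X, Y], by rintro _ _ ⟨⟩ <;> simpa [Xg, Yg]⟩

theorem lift_mk (p : FreeAlgebra K (Fin 2)) :
    lift K X Y hX hXY (mk p) = FreeAlgebra.lift K ![X, Y] p :=
  RingQuot.liftAlgHom_mkAlgHom_apply K _ _ p

@[simp]
theorem lift_x : lift K X Y hX hXY x = X := by
  simp [x, lift_mk, Xg]

@[simp]
theorem lift_y : lift K X Y hX hXY y = Y := by
  simp [y, lift_mk, Yg]

end Lift

variable (K) in
def augmentation : AlgA K →ₐ[K] K := lift K 0 0 (mul_zero 0) (by simp)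

theorem mul_right_eq_augmentation_smul {w : AlgA K} (hx : w * x = 0) (hy : w * y = 0)
    (a : AlgA K) : w * a = augmentation K a • w :=
  mul_right_eq_smul_of_adjoin_eq_top _ adjoin_x_y
    (by rintro _ (rfl | rfl) <;> simp [augmentation, *]) a

theorem mul_left_eq_augmentation_smul {w : AlgA K} (hx : x * w = 0) (hy : y * w = 0)
    (a : AlgA K) : a * w = augmentation K a • w :=
  mul_left_eq_smul_of_adjoin_eq_top _ adjoin_x_y
    (by rintro _ (rfl | rfl) <;> simp [augmentation, *]) a

def u : AlgA K := x * y + y * y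

def v : AlgA K := y * x

theorem u_mul (a : AlgA K) : u * a = augmentation K a • u := by
  obtain ⟨hxyy, hyyy, -⟩ := mul_mul_eq_zero_of_mul_self_eq_zero_of_rel (x_mul_x K) (rel K)
  refine mul_right_eq_augmentation_smul ?_ ?_ a <;> unfold u
  · linear_combination (norm := noncomm_ring) rel K * x - y * y * x_mul_x K
  · linear_combination (norm := noncomm_ring) hxyy + hyyy

theorem mul_u (a : AlgA K) : a * u = augmentation K a • u := by
  obtain ⟨hxyy, hyyy, hyxy⟩ := mul_mul_eq_zero_of_mul_self_eq_zero_of_rel (x_mul_x K) (rel K)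
  refine mul_left_eq_augmentation_smul ?_ ?_ a <;> unfold u
  · linear_combination (norm := noncomm_ring) x_mul_x K * y + hxyy
  · linear_combination (norm := noncomm_ring) hyxy + hyyy

theorem v_mul (a : AlgA K) : v * a = augmentation K a • v := by
  obtain ⟨-, -, hyxy⟩ := mul_mul_eq_zero_of_mul_self_eq_zero_of_rel (x_mul_x K) (rel K)
  refine mul_right_eq_augmentation_smul ?_ ?_ a <;> unfold v
  · linear_combination (norm := noncomm_ring) y * x_mul_x K
  · linear_combination (norm := noncomm_ring) hyxy

-- Left multiplication by `x` and `y` on `A / K·xy`, in the basis `1, x, y, yx, xyx`.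
def repX : Matrix (Fin 5) (Fin 5) K :=
  !![0, 0, 0, 0, 0; 1, 0, 0, 0, 0; 0, 0, 0, 0, 0; 0, 0, 0, 0, 0; 0, 0, 0, 1, 0]

def repY : Matrix (Fin 5) (Fin 5) K :=
  !![0, 0, 0, 0, 0; 0, 0, 0, 0, 0; 1, 0, 0, 0, 0; 0, 1, 0, 0, 0; 0, 0, 1, -1, 0]

variable (K) in
def rep : AlgA K →ₐ[K] Matrix (Fin 5) (Fin 5) K :=
  lift K repX repY
    (by simp [repX, Matrix.cons_mul, Matrix.vecMul_cons, ← Matrix.of_zero])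
    (by simp [repX, repY, Matrix.cons_mul, Matrix.vecMul_cons, ← Matrix.of_zero])

theorem u_ne_zero : (u : AlgA K) ≠ 0 := by
  intro h
  simpa [u, rep, repX, repY, Matrix.mul_apply, Fin.sum_univ_five] using
    congrArg (fun a ↦ rep K a 4 0) h

theorem v_ne_smul_u (t : K) : v ≠ t • (u : AlgA K) := by
  intro h
  simpa [u, v, rep, repX, repY, Matrix.mul_apply, Fin.sum_univ_five] using
    congrArg (fun a ↦ rep K a 3 0) h

theorem v_mul_eq_zero_of_u_mul_eq_zero {r : AlgA K} (hr : u * r = 0) : v * r = 0 := by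
  have : augmentation K r = 0 := by simpa [u_mul, u_ne_zero] using hr
  rw [v_mul, this, zero_smul]

end AlgA

theorem stmt_4_general (K : Type u) [Field K] :
    ¬ Module.Injective (AlgA K)ᵐᵒᵖ (AlgA K) := by
  intro _
  obtain ⟨a, ha⟩ := exists_mul_eq_of_injective_op (u := (AlgA.u : AlgA K))
    fun _ ↦ AlgA.v_mul_eq_zero_of_u_mul_eq_zero
  exact AlgA.v_ne_smul_u _ (by rw [← ha, AlgA.mul_u])

/-- The algebra `A = K⟨x,y⟩/(x², xy + y² + y²x)` over a field `K` of characteristic 0 is not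
self-injective: the right regular module `A_A` (that is, `A` as a left `Aᵐᵒᵖ`-module) is not
injective. -/
theorem stmt_4 (K : Type u) [Field K] [CharZero K] :
    ¬ Module.Injective (AlgA K)ᵐᵒᵖ (AlgA K) :=
  stmt_4_general K

end
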